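/- Assume n ≥ 19 and τ ∈ ℝ. Then for every ε > 0: ∫_0^∞ ε^{n−2} (ε² + r²)^{2−n} r^{n+1} [ (n+2) f(r²)² + 4 r² f(r²) f′(r²) + 2 r⁴ f′(r²)² ] dr = I(ε²) · ∫_0^∞ (1 + r²)^{2−n} r^{n+7} dr, where I(s) = ((n−12)/(n+6))·((n−10)/(n+4))·(n−8)·τ² s² + 10·((n−12)/(n+6))·(n−10)·τ s³ + ( 25·((n−12)/(n+6))·(n+8) − 2(n−12)τ ) s⁴ + ( ((n+8)/10)·τ − 10(n+12) ) s⁵ + ((n+8)/(n−14))·((3n+52)/2) s⁶ − ((n+8)/(n−14))·((n+10)/(n−16))·((n+24)/10) s⁷ + ((n+8)/(n−14))·((n+10)/(n−16))·((n+12)/(n−18))·((n+32)/400) s⁸. -/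

import Mathlib

open scoped BigOperators
open MeasureTheory

/-- The cut-off profile `f(s) = τ + 5s − s² + s³/20`. -/
noncomputable def fpoly (τ s : ℝ) : ℝ := τ + 5 * s - s ^ 2 + s ^ 3 / 20

/-- The polynomial `I(s)` from Proposition 10 of the paper. -/
noncomputable def Ipoly (n : ℕ) (τ s : ℝ) : ℝ :=
  ((n : ℝ) - 12) / ((n : ℝ) + 6) * (((n : ℝ) - 10) / ((n : ℝ) + 4)) * ((n : ℝ) - 8) * τ ^ 2 * s ^ 2
    + 10 * (((n : ℝ) - 12) / ((n : ℝ) + 6)) * ((n : ℝ) - 10) * τ * s ^ 3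
    + (25 * (((n : ℝ) - 12) / ((n : ℝ) + 6)) * ((n : ℝ) + 8) - 2 * ((n : ℝ) - 12) * τ) * s ^ 4
    + ((((n : ℝ) + 8) / 10) * τ - 10 * ((n : ℝ) + 12)) * s ^ 5
    + (((n : ℝ) + 8) / ((n : ℝ) - 14)) * ((3 * (n : ℝ) + 52) / 2) * s ^ 6
    - (((n : ℝ) + 8) / ((n : ℝ) - 14)) * (((n : ℝ) + 10) / ((n : ℝ) - 16)) *
        (((n : ℝ) + 24) / 10) * s ^ 7
    + (((n : ℝ) + 8) / ((n : ℝ) - 14)) * (((n : ℝ) + 10) / ((n : ℝ) - 16)) *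
        (((n : ℝ) + 12) / ((n : ℝ) - 18)) * (((n : ℝ) + 32) / 400) * s ^ 8

open Set Filter Topology

/-!
Substituting `r = ε u` turns the left-hand side into
`ε ^ 4 ∫₀^∞ (1 + u²)^(2-n) u^(n+1) Q(ε² u²) du`, where
`Q(s) = (n+2) f(s)² + 4 s f(s) f'(s) + 2 s² f'(s)²` has degree 6. Expanding `Q` leaves the moments
`M_j = ∫₀^∞ (1 + u²)^(2-n) u^j du`, `j = n+1, n+3, …, n+13`, all finite because `n ≥ 19`.
Integrating `d/du (u^(j+1) (1 + u²)^(3-n))` gives `(2n - j - 7) M_(j+2) = (j + 1) M_j`, which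
expresses each of them as a rational multiple of `M_(n+7)`; collecting terms gives `I(ε²)`.
-/

noncomputable def radialMoment (s : ℝ) (j : ℕ) : ℝ := ∫ r in Ioi (0 : ℝ), (1 + r ^ 2) ^ s * r ^ j

lemma pow_le_one_add_sq_rpow {r : ℝ} (hr : 0 ≤ r) (m : ℕ) :
    r ^ m ≤ (1 + r ^ 2) ^ ((m : ℝ) / 2) := by
  have hsqrt : r ≤ √(1 + r ^ 2) := (le_abs_self r).trans (Real.abs_le_sqrt (by linarith))
  calc r ^ m ≤ √(1 + r ^ 2) ^ m := pow_le_pow_left₀ hr hsqrt m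
    _ = (1 + r ^ 2) ^ ((m : ℝ) / 2) := by
      rw [Real.sqrt_eq_rpow, ← Real.rpow_natCast, ← Real.rpow_mul (by positivity)]
      ring_nf

lemma one_add_sq_rpow_mul_pow_le {r : ℝ} (hr : 0 ≤ r) (s : ℝ) (m : ℕ) :
    (1 + r ^ 2) ^ s * r ^ m ≤ (1 + r ^ 2) ^ (s + (m : ℝ) / 2) := by
  rw [Real.rpow_add (by positivity)]
  exact mul_le_mul_of_nonneg_left (pow_le_one_add_sq_rpow hr m) (by positivity)

lemma integrableOn_one_add_sq_rpow_mul_pow {s : ℝ} {m : ℕ} (h : (m : ℝ) + 2 * s ≤ -2) :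
    IntegrableOn (fun r : ℝ => (1 + r ^ 2) ^ s * r ^ m) (Ioi 0) := by
  have hcont : Continuous fun r : ℝ => (1 + r ^ 2) ^ s * r ^ m :=
    ((continuous_const.add (continuous_pow 2)).rpow_const
      fun r => Or.inl (by simp only [Pi.add_apply]; positivity)).mul (continuous_pow m)
  refine (integrable_inv_one_add_sq.restrict (s := Ioi 0)).mono'
    hcont.aestronglyMeasurable ?_
  filter_upwards [ae_restrict_mem measurableSet_Ioi] with r (hr : 0 < r)
  rw [Real.norm_of_nonneg (by positivity), ← Real.rpow_neg_one]
  exact (one_add_sq_rpow_mul_pow_le hr.le s m).trans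
    (Real.rpow_le_rpow_of_exponent_le (by nlinarith) (by linarith))

lemma tendsto_pow_mul_one_add_sq_rpow_atTop {s : ℝ} {m : ℕ} (h : (m : ℝ) + 2 * s < 0) :
    Tendsto (fun r : ℝ => r ^ m * (1 + r ^ 2) ^ s) atTop (𝓝 0) := by
  have hbig : Tendsto (fun r : ℝ => 1 + r ^ 2) atTop atTop :=
    tendsto_atTop_add_const_left _ 1 (tendsto_pow_atTop two_ne_zero)
  have hdecay : Tendsto (fun r : ℝ => (1 + r ^ 2) ^ (s + (m : ℝ) / 2)) atTop (𝓝 0) := by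
    simpa [Function.comp_def] using
      (tendsto_rpow_neg_atTop (y := -(s + (m : ℝ) / 2)) (by linarith)).comp hbig
  refine squeeze_zero' ?_ ?_ hdecay
  · filter_upwards [eventually_ge_atTop 0] with r hr
    positivity
  · filter_upwards [eventually_ge_atTop 0] with r hr
    rw [mul_comm]
    exact one_add_sq_rpow_mul_pow_le hr s m

/-- Integration by parts against `d/dr (r ^ (j + 1) * (1 + r ^ 2) ^ (s + 1))`. -/
lemma radialMoment_recurrence {s : ℝ} {j : ℕ} (h : (j : ℝ) + 2 * s ≤ -4) :
    -(2 * s + j + 3) * radialMoment s (j + 2) = (j + 1) * radialMoment s j := by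
  have hint_j := integrableOn_one_add_sq_rpow_mul_pow (s := s) (m := j) (by linarith)
  have hint_j2 := integrableOn_one_add_sq_rpow_mul_pow (s := s) (m := j + 2)
    (by push_cast; linarith)
  have hderiv : ∀ r ∈ Ici (0 : ℝ), HasDerivAt (fun r : ℝ => r ^ (j + 1) * (1 + r ^ 2) ^ (s + 1))
      ((j + 1) * ((1 + r ^ 2) ^ s * r ^ j) + (2 * s + j + 3) * ((1 + r ^ 2) ^ s * r ^ (j + 2)))
      r := by
    intro r _
    have hpos : (0 : ℝ) < 1 + r ^ 2 := by positivity
    have hbase : HasDerivAt (fun r : ℝ => 1 + r ^ 2) (2 * r) r := by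
      simpa using (hasDerivAt_pow 2 r).const_add 1
    refine ((hasDerivAt_pow (j + 1) r).mul
      (hbase.rpow_const (p := s + 1) (Or.inl hpos.ne'))).congr_deriv ?_
    rw [add_sub_cancel_right, Real.rpow_add_one hpos.ne']
    push_cast
    ring
  have hFTC := integral_Ioi_of_hasDerivAt_of_tendsto' hderiv
    ((hint_j.const_mul _).add (hint_j2.const_mul _))
    (tendsto_pow_mul_one_add_sq_rpow_atTop (by push_cast; linarith))
  rw [integral_add (hint_j.const_mul _) (hint_j2.const_mul _), integral_const_mul,
    integral_const_mul] at hFTC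
  simp only [zero_pow (Nat.succ_ne_zero j), zero_mul, sub_zero] at hFTC
  rw [radialMoment, radialMoment]
  linarith

lemma radialMoment_two_sub_recurrence {n k : ℕ} (hk : 2 * k + 9 ≤ n) :
    ((n : ℝ) - 8 - 2 * k) * radialMoment (2 - n) (n + 1 + 2 * (k + 1))
      = ((n : ℝ) + 2 + 2 * k) * radialMoment (2 - n) (n + 1 + 2 * k) := by
  have hk' : 2 * (k : ℝ) + 9 ≤ n := by exact_mod_cast hk
  have h := radialMoment_recurrence (s := 2 - n) (j := n + 1 + 2 * k) (by push_cast; linarith)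
  rw [show n + 1 + 2 * k + 2 = n + 1 + 2 * (k + 1) by ring] at h
  push_cast at h
  linarith

lemma integral_one_add_sq_rpow_mul_pow_mul_sum {s a : ℝ} {m N : ℕ} (c : Fin N → ℝ)
    (h : ∀ k : Fin N, ((m + 2 * k : ℕ) : ℝ) + 2 * s ≤ -2) :
    ∫ u in Ioi (0 : ℝ), (1 + u ^ 2) ^ s * u ^ m * ∑ k : Fin N, c k * ((a * u) ^ 2) ^ (k : ℕ)
      = ∑ k : Fin N, c k * a ^ (2 * (k : ℕ)) * radialMoment s (m + 2 * (k : ℕ)) := by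
  have hexpand : ∀ u : ℝ, (1 + u ^ 2) ^ s * u ^ m * ∑ k : Fin N, c k * ((a * u) ^ 2) ^ (k : ℕ)
      = ∑ k : Fin N, c k * a ^ (2 * (k : ℕ)) * ((1 + u ^ 2) ^ s * u ^ (m + 2 * (k : ℕ))) := by
    intro u
    rw [Finset.mul_sum]
    refine Finset.sum_congr rfl fun k _ => ?_
    rw [pow_add, ← pow_mul, mul_pow, pow_mul]
    ring
  simp_rw [hexpand]
  rw [integral_finsetSum _ fun k _ => (integrableOn_one_add_sq_rpow_mul_pow (h k)).const_mul _]
  simp only [integral_const_mul, radialMoment]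

lemma integral_Ioi_zero_eq_mul_integral_comp_mul {ε : ℝ} (hε : 0 < ε) (g : ℝ → ℝ) :
    ∫ r in Ioi (0 : ℝ), g r = ε * ∫ u in Ioi (0 : ℝ), g (ε * u) := by
  simpa using (integral_comp_mul_left_Ioi' g 0 hε).symm

lemma mul_scaled_weight {n : ℕ} (hn : 2 ≤ n) {ε : ℝ} (hε : 0 < ε) (u g : ℝ) :
    ε * (ε ^ (n - 2) * (ε ^ 2 + (ε * u) ^ 2) ^ ((2 : ℝ) - n) * (ε * u) ^ (n + 1) * g)
      = ε ^ 4 * ((1 + u ^ 2) ^ ((2 : ℝ) - n) * u ^ (n + 1) * g) := by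
  obtain ⟨m, rfl⟩ : ∃ m, n = m + 2 := ⟨n - 2, by omega⟩
  have hexp : (2 : ℝ) - ((m + 2 : ℕ) : ℝ) = -(m : ℝ) := by push_cast; ring
  rw [show ε ^ 2 + (ε * u) ^ 2 = ε ^ 2 * (1 + u ^ 2) by ring,
    Real.mul_rpow (by positivity) (by positivity), hexp, Real.rpow_neg (by positivity),
    Real.rpow_natCast, Nat.add_sub_cancel]
  field_simp
  ring

lemma deriv_fpoly (τ s : ℝ) : deriv (fpoly τ) s = 5 - 2 * s + 3 * s ^ 2 / 20 := by
  have h : HasDerivAt (fpoly τ)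
      (5 * 1 - ((2 : ℕ) * s ^ (2 - 1)) + ((3 : ℕ) * s ^ (3 - 1)) / 20) s :=
    ((((hasDerivAt_id s).const_mul 5).const_add τ).sub (hasDerivAt_pow 2 s)).add
      ((hasDerivAt_pow 3 s).div_const 20)
  rw [h.deriv]
  push_cast
  ring

noncomputable def energyCoeff (n : ℕ) (τ : ℝ) : Fin 7 → ℝ :=
  ![((n : ℝ) + 2) * τ ^ 2, (10 * n + 40) * τ, 25 * n + 200 - 2 * (n + 6) * τ,
    (n + 8) * τ / 10 - 10 * n - 120, (3 * n + 52) / 2, -((n : ℝ) + 24) / 10, ((n : ℝ) + 32) / 400]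

lemma energy_fpoly_eq_sum_energyCoeff (n : ℕ) (τ r : ℝ) :
    ((n : ℝ) + 2) * fpoly τ (r ^ 2) ^ 2 + 4 * r ^ 2 * fpoly τ (r ^ 2) * deriv (fpoly τ) (r ^ 2)
        + 2 * r ^ 4 * (deriv (fpoly τ) (r ^ 2)) ^ 2
      = ∑ k : Fin 7, energyCoeff n τ k * (r ^ 2) ^ (k : ℕ) := by
  rw [Fin.sum_univ_seven, deriv_fpoly]
  simp only [energyCoeff, fpoly, Fin.isValue, Matrix.cons_val, Fin.coe_ofNat_eq_mod, Nat.reduceMod]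
  ring

lemma sum_energyCoeff_mul_eq_Ipoly_mul {n : ℕ} (hn : 19 ≤ n) (τ ε : ℝ) (M : ℕ → ℝ)
    (hM : ∀ k ≤ 5, ((n : ℝ) - 8 - 2 * k) * M (k + 1) = ((n : ℝ) + 2 + 2 * k) * M k) :
    ε ^ 4 * ∑ k : Fin 7, energyCoeff n τ k * ε ^ (2 * (k : ℕ)) * M k
      = Ipoly n τ (ε ^ 2) * M 3 := by
  have hn' : (19 : ℝ) ≤ n := by exact_mod_cast hn
  have hdown : ∀ k ≤ 5, M k = ((n : ℝ) - 8 - 2 * k) / ((n : ℝ) + 2 + 2 * k) * M (k + 1) :=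
    fun k hk => by
      rw [div_mul_eq_mul_div, eq_div_iff (by positivity)]
      linarith [hM k hk]
  have hup : ∀ k ≤ 5, M (k + 1) = ((n : ℝ) + 2 + 2 * k) / ((n : ℝ) - 8 - 2 * k) * M k :=
    fun k hk => by
      have hk' : (k : ℝ) ≤ 5 := by exact_mod_cast hk
      rw [div_mul_eq_mul_div, eq_div_iff (by linarith)]
      linarith [hM k hk]
  rw [Fin.sum_univ_seven]
  simp only [energyCoeff, Fin.isValue, Matrix.cons_val, Fin.coe_ofNat_eq_mod, Nat.reduceMod]
  rw [hdown 0 (by norm_num), hdown 1 (by norm_num), hdown 2 (by norm_num), hup 5 (by norm_num),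
    hup 4 (by norm_num), hup 3 (by norm_num)]
  have h14 : (n : ℝ) - 14 ≠ 0 := by linarith
  have h16 : (n : ℝ) - 16 ≠ 0 := by linarith
  have h18 : (n : ℝ) - 18 ≠ 0 := by linarith
  simp only [Ipoly]
  norm_num only [Nat.cast_ofNat, Nat.cast_zero, Nat.cast_one, sub_sub]
  field_simp
  ring

theorem stmt_11 (n : ℕ) (hn : 19 ≤ n) (τ : ℝ) (ε : ℝ) (hε : 0 < ε) :
    ∫ r in Set.Ioi (0 : ℝ),
        ε ^ (n - 2) * (ε ^ 2 + r ^ 2) ^ ((2 : ℝ) - n) * r ^ (n + 1) *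
          (((n : ℝ) + 2) * fpoly τ (r ^ 2) ^ 2
            + 4 * r ^ 2 * fpoly τ (r ^ 2) * deriv (fpoly τ) (r ^ 2)
            + 2 * r ^ 4 * (deriv (fpoly τ) (r ^ 2)) ^ 2)
      = Ipoly n τ (ε ^ 2) *
          ∫ r in Set.Ioi (0 : ℝ), (1 + r ^ 2) ^ ((2 : ℝ) - n) * r ^ (n + 7) := by
  simp_rw [energy_fpoly_eq_sum_energyCoeff]
  rw [integral_Ioi_zero_eq_mul_integral_comp_mul hε, ← integral_const_mul]
  simp_rw [mul_scaled_weight (by omega : 2 ≤ n) hε]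
  rw [integral_const_mul, integral_one_add_sq_rpow_mul_pow_mul_sum]
  · exact sum_energyCoeff_mul_eq_Ipoly_mul hn τ ε (fun k => radialMoment (2 - n) (n + 1 + 2 * k))
      fun k hk => radialMoment_two_sub_recurrence (by omega)
  · intro k
    have hn' : (19 : ℝ) ≤ n := by exact_mod_cast hn
    have hk : (k : ℝ) ≤ 6 := by exact_mod_cast Nat.le_of_lt_succ k.isLt
    push_cast
    linarith
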